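/- The complex line integral of v/√(1 − v⁶) along the straight segment from 1 to w converges to −∫₀¹ x/√(1 − x⁶) dx as w → 0 inside the unit disk: for w ∈ ℂ with |w| < 1 define F(w) := ∫₀¹ (w − 1) · γ_w(t) · (1 − γ_w(t)⁶)^(−1/2) dt, where γ_w(t) := 1 + t·(w − 1) and z^(−1/2) denotes the principal complex power Complex.cpow z (−1/2). Then F(w) tends to −∫₀¹ x/√(1 − x⁶) dx as w → 0 within the open unit disk. -/

import Mathlib

/-!
On the segment, `‖γ_w(t)‖ ≤ 1 - t (1 - ‖w‖)`, so `Re (1 - γ_w(t)⁶) ≥ t (1 - ‖w‖)` and the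
integrand is bounded by a constant multiple of `t^(-1/2)`, uniformly for `‖w‖ ≤ r < 1`.
Dominated convergence therefore makes `segInt` continuous on the open unit disk, and at `w = 0`
the substitution `x = 1 - t` turns `segInt 0` into the real integral.
-/

open Complex

/-- The straight segment from 1 to w: γ_w(t) = 1 + t·(w − 1). -/
noncomputable def gammaPath (w : ℂ) (t : ℝ) : ℂ := 1 + (t : ℂ) * (w - 1)

/-- The complex line integral of v/√(1 − v⁶) along the straight segment from 1 to w,
using the principal complex power for the square root. -/
noncomputable def segInt (w : ℂ) : ℂ :=
  ∫ t in (0 : ℝ)..1, (w - 1) * gammaPath w t * (1 - gammaPath w t ^ 6) ^ (-(1 / 2) : ℂ)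

open Filter Set MeasureTheory Topology

lemma gammaPath_eq (w : ℂ) (t : ℝ) : gammaPath w t = ((1 - t : ℝ) : ℂ) + t * w := by
  unfold gammaPath; push_cast; ring

lemma norm_gammaPath_le (w : ℂ) {t : ℝ} (ht : t ∈ Icc (0 : ℝ) 1) :
    ‖gammaPath w t‖ ≤ 1 - t * (1 - ‖w‖) := by
  calc ‖gammaPath w t‖ ≤ ‖((1 - t : ℝ) : ℂ)‖ + ‖(t : ℂ) * w‖ := by
        rw [gammaPath_eq]; exact norm_add_le _ _
    _ = 1 - t * (1 - ‖w‖) := by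
        rw [norm_mul, Complex.norm_real, Complex.norm_real,
          Real.norm_of_nonneg (by linarith [ht.2]), Real.norm_of_nonneg ht.1]
        ring

lemma mul_one_sub_norm_le_re_one_sub_gammaPath_pow {w : ℂ} (hw : ‖w‖ ≤ 1) {t : ℝ}
    (ht : t ∈ Icc (0 : ℝ) 1) {n : ℕ} (hn : n ≠ 0) :
    t * (1 - ‖w‖) ≤ (1 - gammaPath w t ^ n).re := by
  have hγ := norm_gammaPath_le w ht
  have hγ_le_one : ‖gammaPath w t‖ ≤ 1 := hγ.trans (by nlinarith [ht.1])
  have hpow : ‖gammaPath w t ^ n‖ ≤ ‖gammaPath w t‖ := by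
    rw [norm_pow]; exact pow_le_of_le_one (norm_nonneg _) hγ_le_one hn
  have := (Complex.re_le_norm (gammaPath w t ^ n)).trans hpow
  simp only [Complex.sub_re, Complex.one_re]
  linarith

lemma Complex.norm_cpow_le_of_le_re {z : ℂ} {c s : ℝ} (hc : 0 < c) (hcz : c ≤ z.re)
    (hs : s ≤ 0) :
    ‖z ^ (s : ℂ)‖ ≤ c ^ s := by
  rw [Complex.norm_cpow_real]
  exact Real.rpow_le_rpow_of_nonpos hc (hcz.trans (Complex.re_le_norm z)) hs

lemma Complex.ofReal_cpow_neg_half {x : ℝ} (hx : 0 ≤ x) :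
    (x : ℂ) ^ (-(1 / 2) : ℂ) = ((Real.sqrt x)⁻¹ : ℝ) := by
  rw [Real.sqrt_eq_rpow, ← Real.rpow_neg hx, Complex.ofReal_cpow hx]
  norm_num

noncomputable def segIntegrand (w : ℂ) (t : ℝ) : ℂ :=
  (w - 1) * gammaPath w t * (1 - gammaPath w t ^ 6) ^ (-(1 / 2) : ℂ)

lemma norm_segIntegrand_le {r : ℝ} (hr : r < 1) {w : ℂ} (hw : ‖w‖ ≤ r) {t : ℝ}
    (ht : t ∈ Ioc (0 : ℝ) 1) :
    ‖segIntegrand w t‖ ≤ 2 * (1 - r) ^ (-(1 / 2) : ℝ) * t ^ (-(1 / 2) : ℝ) := by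
  have ht' : t ∈ Icc (0 : ℝ) 1 := Ioc_subset_Icc_self ht
  have hsub : ‖w - 1‖ ≤ 2 := (norm_sub_le _ _).trans (by rw [norm_one]; linarith)
  have hγ : ‖gammaPath w t‖ ≤ 1 := (norm_gammaPath_le w ht').trans (by nlinarith [ht.1])
  have hre : t * (1 - r) ≤ (1 - gammaPath w t ^ 6).re :=
    le_trans (by nlinarith [ht.1])
      (mul_one_sub_norm_le_re_one_sub_gammaPath_pow (hw.trans hr.le) ht' (by norm_num))
  have hcpow := Complex.norm_cpow_le_of_le_re (mul_pos ht.1 (sub_pos.2 hr)) hre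
    (by norm_num : (-(1 / 2) : ℝ) ≤ 0)
  rw [Real.mul_rpow ht.1.le (sub_pos.2 hr).le] at hcpow
  push_cast at hcpow
  unfold segIntegrand
  rw [norm_mul, norm_mul]
  calc ‖w - 1‖ * ‖gammaPath w t‖ * ‖(1 - gammaPath w t ^ 6) ^ (-(1 / 2) : ℂ)‖
      ≤ 2 * 1 * (t ^ (-(1 / 2) : ℝ) * (1 - r) ^ (-(1 / 2) : ℝ)) := by gcongr
    _ = _ := by ring

lemma continuousAt_segIntegrand {w : ℂ} (hw : ‖w‖ < 1) {t : ℝ} (ht : t ∈ Ioc (0 : ℝ) 1) :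
    ContinuousAt (segIntegrand · t) w := by
  have hslit : 1 - gammaPath w t ^ 6 ∈ Complex.slitPlane :=
    Complex.mem_slitPlane_iff.2 <| Or.inl <| (mul_pos ht.1 (sub_pos.2 hw)).trans_le
      (mul_one_sub_norm_le_re_one_sub_gammaPath_pow hw.le (Ioc_subset_Icc_self ht)
        (by norm_num))
  unfold segIntegrand gammaPath at *
  fun_prop (disch := assumption)

lemma measurable_segIntegrand (w : ℂ) : Measurable (segIntegrand w) := by
  unfold segIntegrand gammaPath
  fun_prop

lemma continuousAt_segInt {w : ℂ} (hw : ‖w‖ < 1) : ContinuousAt segInt w := by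
  obtain ⟨r, hwr, hr⟩ := exists_between hw
  have hnear : ∀ᶠ v in 𝓝 w, ‖v‖ ≤ r :=
    (continuous_norm.tendsto w).eventually (eventually_le_nhds hwr)
  refine intervalIntegral.continuousAt_of_dominated_interval
    (F := segIntegrand) (bound := fun t ↦ 2 * (1 - r) ^ (-(1 / 2) : ℝ) * t ^ (-(1 / 2) : ℝ))
    (Eventually.of_forall fun v ↦ (measurable_segIntegrand v).aestronglyMeasurable)
    (hnear.mono fun v hv ↦ ae_of_all _ fun t ht ↦ ?_)
    ((intervalIntegral.intervalIntegrable_rpow' (by norm_num)).const_mul _)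
    (ae_of_all _ fun t ht ↦ ?_)
  · rw [uIoc_of_le zero_le_one] at ht
    exact norm_segIntegrand_le hr hv ht
  · rw [uIoc_of_le zero_le_one] at ht
    exact continuousAt_segIntegrand hw ht

lemma segInt_zero :
    segInt 0 = -((∫ x in Ioo (0 : ℝ) 1, x / Real.sqrt (1 - x ^ 6) : ℝ) : ℂ) := by
  have hpoint : EqOn (segIntegrand 0)
      (fun t : ℝ ↦ ((-((1 - t) / Real.sqrt (1 - (1 - t) ^ 6)) : ℝ) : ℂ)) (uIcc 0 1) := by
    intro t ht
    rw [uIcc_of_le zero_le_one] at ht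
    have hx : (0 : ℝ) ≤ 1 - (1 - t) ^ 6 :=
      sub_nonneg.2 (pow_le_one₀ (by linarith [ht.2]) (by linarith [ht.1]))
    have hbase : (1 : ℂ) - gammaPath 0 t ^ 6 = ((1 - (1 - t) ^ 6 : ℝ) : ℂ) := by
      rw [gammaPath_eq]; push_cast; ring
    rw [segIntegrand, hbase, Complex.ofReal_cpow_neg_half hx, gammaPath_eq]
    push_cast; ring
  have hflip : ∫ t in (0 : ℝ)..1, (1 - t) / Real.sqrt (1 - (1 - t) ^ 6)
      = ∫ x in (0 : ℝ)..1, x / Real.sqrt (1 - x ^ 6) := by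
    simpa using intervalIntegral.integral_comp_sub_left
      (fun x : ℝ ↦ x / Real.sqrt (1 - x ^ 6)) (a := 0) (b := 1) 1
  change ∫ t in (0 : ℝ)..1, segIntegrand 0 t = _
  rw [intervalIntegral.integral_congr hpoint, intervalIntegral.integral_ofReal,
    intervalIntegral.integral_neg, hflip, intervalIntegral.integral_of_le zero_le_one,
    integral_Ioc_eq_integral_Ioo]
  push_cast; rfl

/-- As w → 0 inside the open unit disk, the line integral of v/√(1 − v⁶) along the
segment from 1 to w tends to −∫₀¹ x/√(1 − x⁶) dx. -/
theorem segInt_tendsto :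
    Filter.Tendsto segInt (nhdsWithin 0 (Metric.ball (0 : ℂ) 1))
      (nhds (-((∫ x in Set.Ioo (0 : ℝ) 1, x / Real.sqrt (1 - x ^ 6) : ℝ) : ℂ))) := by
  rw [← segInt_zero]
  exact (continuousAt_segInt (by simp)).continuousWithinAt.tendsto
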